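/- If E is a directed graph, R is an associative unital ring, G is a group, and L_R(E) is equipped with any standard G-gradation S = ⊕_{g∈G} S_g, then L_R(E) is symmetrically G-graded (S_g S_{g⁻¹} S_g = S_g for all g ∈ G), and for every g ∈ G and every nonzero x ∈ S_g one has (S_g S_{g⁻¹}) x ≠ {0} and x (S_{g⁻¹} S_g) ≠ {0} (i.e. L_R(E) is strongly right non-degenerately G-graded and strongly left non-degenerately G-graded). -/

import Mathlib

namespace LPA

/-- Generators of the Leavitt path algebra: a vertex `v`, a (real) edge `f`,
or a ghost edge `f*`. -/
inductive Gen (V Ed : Type*) : Type _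
  | vertex : V → Gen V Ed
  | edge : Ed → Gen V Ed
  | ghost : Ed → Gen V Ed

/-- The free `R`-ring on the generators, with `R` commuting with the generators. -/
abbrev FreeLPA (R V Ed : Type*) [Ring R] : Type _ := MonoidAlgebra R (FreeMonoid (Gen V Ed))

noncomputable def genF (R : Type*) [Ring R] {V Ed : Type*} (x : Gen V Ed) : FreeLPA R V Ed :=
  MonoidAlgebra.of R (FreeMonoid (Gen V Ed)) (FreeMonoid.of x)

/-- The defining relations of the Leavitt path algebra of the graph with vertices `V`,
edges `Ed`, source map `sf` and range map `rf`. -/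
inductive Rel (R : Type*) [Ring R] {V Ed : Type*} (sf rf : Ed → V) :
    FreeLPA R V Ed → FreeLPA R V Ed → Prop
  | vertex_eq (v : V) :
      Rel R sf rf (genF R (Gen.vertex v) * genF R (Gen.vertex v)) (genF R (Gen.vertex v))
  | vertex_ne {v w : V} (h : v ≠ w) :
      Rel R sf rf (genF R (Gen.vertex v) * genF R (Gen.vertex w)) 0
  | src_edge (f : Ed) :
      Rel R sf rf (genF R (Gen.vertex (sf f)) * genF R (Gen.edge f)) (genF R (Gen.edge f))
  | edge_rng (f : Ed) :
      Rel R sf rf (genF R (Gen.edge f) * genF R (Gen.vertex (rf f))) (genF R (Gen.edge f))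
  | rng_ghost (f : Ed) :
      Rel R sf rf (genF R (Gen.vertex (rf f)) * genF R (Gen.ghost f)) (genF R (Gen.ghost f))
  | ghost_src (f : Ed) :
      Rel R sf rf (genF R (Gen.ghost f) * genF R (Gen.vertex (sf f))) (genF R (Gen.ghost f))
  | ghost_edge_eq (f : Ed) :
      Rel R sf rf (genF R (Gen.ghost f) * genF R (Gen.edge f)) (genF R (Gen.vertex (rf f)))
  | ghost_edge_ne {f f' : Ed} (h : f ≠ f') :
      Rel R sf rf (genF R (Gen.ghost f) * genF R (Gen.edge f')) 0
  | cuntz_krieger (v : V) (h1 : {f : Ed | sf f = v}.Nonempty) (h2 : {f : Ed | sf f = v}.Finite) :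
      Rel R sf rf (∑ f ∈ h2.toFinset, genF R (Gen.edge f) * genF R (Gen.ghost f))
        (genF R (Gen.vertex v))

/-- The Leavitt path algebra `L_R(E)` (as the ambient unital quotient ring in which the
span of the monomials `α β*` is the Leavitt path algebra). -/
abbrev LeavittPathAlgebra (R : Type*) [Ring R] {V Ed : Type*} (sf rf : Ed → V) : Type _ :=
  RingQuot (Rel R sf rf)

noncomputable def gen (R : Type*) [Ring R] {V Ed : Type*} (sf rf : Ed → V) (x : Gen V Ed) :
    LeavittPathAlgebra R sf rf :=
  RingQuot.mkRingHom (Rel R sf rf) (genF R x)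

noncomputable def ofR (R : Type*) [Ring R] {V Ed : Type*} (sf rf : Ed → V) (r : R) :
    LeavittPathAlgebra R sf rf :=
  RingQuot.mkRingHom (Rel R sf rf) (MonoidAlgebra.single (1 : FreeMonoid (Gen V Ed)) r)

/-- Paths in the directed graph. `GPath sf rf u w` are the paths with source `u`
and range `w`; a vertex is a path of length `0`. -/
inductive GPath {V Ed : Type*} (sf rf : Ed → V) : V → V → Type _
  | nil (v : V) : GPath sf rf v v
  | cons (f : Ed) {w : V} (p : GPath sf rf (rf f) w) : GPath sf rf (sf f) w

namespace GPath

def length {V Ed : Type*} {sf rf : Ed → V} : {u w : V} → GPath sf rf u w → ℕ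
  | _, _, nil _ => 0
  | _, _, cons _ p => length p + 1

def edgeList {V Ed : Type*} {sf rf : Ed → V} : {u w : V} → GPath sf rf u w → List Ed
  | _, _, nil _ => []
  | _, _, cons f p => f :: edgeList p

/-- The degree of a path with respect to a degree map `dg : Ed → G`. -/
def degree {V Ed : Type*} {sf rf : Ed → V} {G : Type*} [Group G] (dg : Ed → G) :
    {u w : V} → GPath sf rf u w → G
  | _, _, nil _ => 1
  | _, _, cons f p => dg f * degree dg p

end GPath

/-- The element `α` of `L_R(E)` associated to a path `α` (a vertex if `α` has length 0). -/
noncomputable def realElem (R : Type*) [Ring R] {V Ed : Type*} (sf rf : Ed → V) :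
    {u w : V} → GPath sf rf u w → LeavittPathAlgebra R sf rf
  | _, _, .nil v => gen R sf rf (Gen.vertex v)
  | _, _, .cons f p => gen R sf rf (Gen.edge f) * realElem R sf rf p

/-- The element `α* = α_n* ⋯ α_1*` of `L_R(E)` associated to a path `α`. -/
noncomputable def ghostElem (R : Type*) [Ring R] {V Ed : Type*} (sf rf : Ed → V) :
    {u w : V} → GPath sf rf u w → LeavittPathAlgebra R sf rf
  | _, _, .nil v => gen R sf rf (Gen.vertex v)
  | _, _, .cons f p => ghostElem R sf rf p * gen R sf rf (Gen.ghost f)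

/-- The product `AB` of two additive subgroups of a ring: the additive subgroup
generated by all products `ab`, `a ∈ A`, `b ∈ B`. -/
def sgMul {A : Type*} [NonUnitalRing A] (B C : AddSubgroup A) : AddSubgroup A :=
  AddSubgroup.closure {x | ∃ b ∈ B, ∃ c ∈ C, x = b * c}

/-- The homogeneous component `S_g` of the standard `G`-gradation of `L_R(E)` attached
to the degree map `dg : Ed → G`: the `R`-span of the monomials `α β*` with
`r(α) = r(β)` and `deg α * (deg β)⁻¹ = g`. -/
noncomputable def component (R : Type*) [Ring R] {V Ed : Type*} (sf rf : Ed → V) {G : Type*} [Group G]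
    (dg : Ed → G) (g : G) : AddSubgroup (LeavittPathAlgebra R sf rf) :=
  AddSubgroup.closure
    {x | ∃ (r : R) (u u' w : V) (α : GPath sf rf u w) (β : GPath sf rf u' w),
      α.degree dg * (β.degree dg)⁻¹ = g ∧
      x = ofR R sf rf r * (realElem R sf rf α * ghostElem R sf rf β)}

/-- The homogeneous component `S_n` of the canonical `ℤ`-gradation of `L_R(E)`:
the `R`-span of the monomials `α β*` with `r(α) = r(β)` and `l(α) - l(β) = n`. -/
noncomputable def componentZ (R : Type*) [Ring R] {V Ed : Type*} (sf rf : Ed → V) (n : ℤ) :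
    AddSubgroup (LeavittPathAlgebra R sf rf) :=
  AddSubgroup.closure
    {x | ∃ (r : R) (u u' w : V) (α : GPath sf rf u w) (β : GPath sf rf u' w),
      (α.length : ℤ) - (β.length : ℤ) = n ∧
      x = ofR R sf rf r * (realElem R sf rf α * ghostElem R sf rf β)}

end LPA

/-!
A homogeneous element `x ∈ S_g` is a finite sum of monomials `r α β*` with
`deg α (deg β)⁻¹ = g`. Such a monomial is fixed on the left by the idempotent
`α α* = (α β*)(β α*) ∈ S_g S_{g⁻¹}` and on the right by `β β* ∈ S_{g⁻¹} S_g`.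
Because of the relation `β* α = 0` unless one of `α, β` extends the other, the elements
`α α*` commute pairwise and span a commutative subring (the diagonal), contained in `S_e`.
Local units of two summands combine: if the commuting `e₁, e₂` fix `x` and `y`, then
`e₁ + e₂ - e₁ e₂` fixes `x + y`, and it stays in `S_g S_{g⁻¹}` since `S_{g⁻¹} S_e ⊆ S_{g⁻¹}`.
So every `x ∈ S_g` satisfies `x = e x` for some `e ∈ S_g S_{g⁻¹}` (and `x = x e'` with
`e' ∈ S_{g⁻¹} S_g`), which yields both `S_g ⊆ S_g S_{g⁻¹} S_g` and non-degeneracy.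
-/

namespace LPA

section Closure

variable {A : Type*} [NonUnitalRing A]

theorem mul_mem_of_mem_closure {S T : Set A} {K : AddSubgroup A}
    (h : ∀ s ∈ S, ∀ t ∈ T, s * t ∈ K) {x y : A} (hx : x ∈ AddSubgroup.closure S)
    (hy : y ∈ AddSubgroup.closure T) : x * y ∈ K := by
  induction hx using AddSubgroup.closure_induction with
  | mem s hs =>
    induction hy using AddSubgroup.closure_induction with
    | mem t ht => exact h s hs t ht
    | zero => simp
    | add y z _ _ hy hz => simpa only [mul_add] using add_mem hy hz
    | neg y _ hy => simpa only [mul_neg] using neg_mem hy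
  | zero => simp
  | add x z _ _ hx hz => simpa only [add_mul] using add_mem hx hz
  | neg x _ hx => simpa only [neg_mul] using neg_mem hx

theorem mem_sgMul {B C : AddSubgroup A} {b c : A} (hb : b ∈ B) (hc : c ∈ C) :
    b * c ∈ sgMul B C :=
  AddSubgroup.subset_closure ⟨b, hb, c, hc, rfl⟩

theorem sgMul_le {B C K : AddSubgroup A} (h : ∀ b ∈ B, ∀ c ∈ C, b * c ∈ K) : sgMul B C ≤ K :=
  (AddSubgroup.closure_le K).mpr fun _ ⟨b, hb, c, hc, hx⟩ => hx ▸ h b hb c hc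

theorem mul_mem_sgMul {B C : AddSubgroup A} {a d : A} (hd : ∀ c ∈ C, c * d ∈ C)
    (ha : a ∈ sgMul B C) : a * d ∈ sgMul B C := by
  refine mul_mem_of_mem_closure ?_ ha (AddSubgroup.subset_closure (Set.mem_singleton d))
  rintro _ ⟨b, hb, c, hc, rfl⟩ _ rfl
  rw [mul_assoc]
  exact mem_sgMul hb (hd c hc)

section LocalUnits

variable {M : AddSubgroup A} {D : NonUnitalSubring A} [IsMulCommutative D]
  (hM : ∀ a ∈ M, ∀ d ∈ D, a * d ∈ M)
include hM

theorem exists_left_unit_of_mem_closure {S : Set A} (hS : ∀ s ∈ S, ∃ e ∈ M, e ∈ D ∧ e * s = s)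
    {x : A} (hx : x ∈ AddSubgroup.closure S) : ∃ e ∈ M, e ∈ D ∧ e * x = x := by
  induction hx using AddSubgroup.closure_induction with
  | mem s hs => exact hS s hs
  | zero => exact ⟨0, zero_mem M, zero_mem D, mul_zero 0⟩
  | add x y _ _ hx hy =>
    obtain ⟨e₁, he₁M, he₁D, hx⟩ := hx
    obtain ⟨e₂, he₂M, he₂D, hy⟩ := hy
    refine ⟨e₁ + e₂ - e₁ * e₂, sub_mem (add_mem he₁M he₂M) (hM e₁ he₁M e₂ he₂D),
      sub_mem (add_mem he₁D he₂D) (mul_mem he₁D he₂D), ?_⟩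
    have hx' : e₁ * e₂ * x = e₂ * x := by rw [setLike_mul_comm he₁D he₂D, mul_assoc, hx]
    have hy' : e₁ * e₂ * y = e₁ * y := by rw [mul_assoc, hy]
    rw [sub_mul, add_mul, mul_add, mul_add, mul_add, hx', hy', hx, hy]
    abel
  | neg x _ hx =>
    obtain ⟨e, heM, heD, hx⟩ := hx
    exact ⟨e, heM, heD, by rw [mul_neg, hx]⟩

theorem exists_right_unit_of_mem_closure {S : Set A} (hS : ∀ s ∈ S, ∃ e ∈ M, e ∈ D ∧ s * e = s)
    {x : A} (hx : x ∈ AddSubgroup.closure S) : ∃ e ∈ M, e ∈ D ∧ x * e = x := by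
  induction hx using AddSubgroup.closure_induction with
  | mem s hs => exact hS s hs
  | zero => exact ⟨0, zero_mem M, zero_mem D, mul_zero 0⟩
  | add x y _ _ hx hy =>
    obtain ⟨e₁, he₁M, he₁D, hx⟩ := hx
    obtain ⟨e₂, he₂M, he₂D, hy⟩ := hy
    refine ⟨e₁ + e₂ - e₁ * e₂, sub_mem (add_mem he₁M he₂M) (hM e₁ he₁M e₂ he₂D),
      sub_mem (add_mem he₁D he₂D) (mul_mem he₁D he₂D), ?_⟩
    have hx' : x * (e₁ * e₂) = x * e₂ := by rw [← mul_assoc, hx]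
    have hy' : y * (e₁ * e₂) = y * e₁ := by rw [setLike_mul_comm he₁D he₂D, ← mul_assoc, hy]
    rw [add_mul, mul_sub, mul_sub, mul_add, mul_add, hx', hy', hx, hy]
    abel
  | neg x _ hx =>
    obtain ⟨e, heM, heD, hx⟩ := hx
    exact ⟨e, heM, heD, by rw [neg_mul, hx]⟩

end LocalUnits

end Closure

def GPath.comp {V Ed : Type*} {sf rf : Ed → V} :
    {u v w : V} → GPath sf rf u v → GPath sf rf v w → GPath sf rf u w
  | _, _, _, .nil _, q => q
  | _, _, _, .cons f p, q => .cons f (p.comp q)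

theorem GPath.degree_comp {V Ed G : Type*} {sf rf : Ed → V} [Group G] (dg : Ed → G) {u v w : V}
    (p : GPath sf rf u v) (q : GPath sf rf v w) :
    (p.comp q).degree dg = p.degree dg * q.degree dg := by
  induction p with
  | nil v => rw [comp, degree, one_mul]
  | cons f p ih => rw [comp, degree, degree, ih, mul_assoc]

section Paths

variable {R : Type*} [Ring R] {V Ed : Type*} {sf rf : Ed → V}

theorem gen_mul_gen_of_rel {x y : Gen V Ed} {z : FreeLPA R V Ed}
    (h : Rel R sf rf (genF R x * genF R y) z) :
    gen R sf rf x * gen R sf rf y = RingQuot.mkRingHom (Rel R sf rf) z := by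
  rw [gen, gen, ← map_mul]
  exact RingQuot.mkRingHom_rel h

theorem gen_vertex_mul_self (v : V) :
    gen R sf rf (.vertex v) * gen R sf rf (.vertex v) = gen R sf rf (.vertex v) :=
  gen_mul_gen_of_rel (.vertex_eq v)

theorem gen_vertex_mul_vertex_of_ne {v w : V} (h : v ≠ w) :
    gen R sf rf (.vertex v) * gen R sf rf (.vertex w) = 0 :=
  (gen_mul_gen_of_rel (.vertex_ne h)).trans (map_zero _)

theorem gen_vertex_mul_edge (f : Ed) :
    gen R sf rf (.vertex (sf f)) * gen R sf rf (.edge f) = gen R sf rf (.edge f) :=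
  gen_mul_gen_of_rel (.src_edge f)

theorem gen_ghost_mul_vertex (f : Ed) :
    gen R sf rf (.ghost f) * gen R sf rf (.vertex (sf f)) = gen R sf rf (.ghost f) :=
  gen_mul_gen_of_rel (.ghost_src f)

theorem gen_ghost_mul_edge (f : Ed) :
    gen R sf rf (.ghost f) * gen R sf rf (.edge f) = gen R sf rf (.vertex (rf f)) :=
  gen_mul_gen_of_rel (.ghost_edge_eq f)

theorem gen_ghost_mul_edge_of_ne {f f' : Ed} (h : f ≠ f') :
    gen R sf rf (.ghost f) * gen R sf rf (.edge f') = 0 :=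
  (gen_mul_gen_of_rel (.ghost_edge_ne h)).trans (map_zero _)

theorem ofR_one : ofR R sf rf 1 = 1 := by
  rw [ofR, ← MonoidAlgebra.one_def, map_one]

theorem ofR_mul_ofR (r r' : R) : ofR R sf rf r * ofR R sf rf r' = ofR R sf rf (r * r') := by
  rw [ofR, ofR, ofR, ← map_mul, MonoidAlgebra.single_mul_single, one_mul]

theorem commute_ofR_gen (r : R) (x : Gen V Ed) : Commute (ofR R sf rf r) (gen R sf rf x) := by
  simp only [Commute, SemiconjBy, ofR, gen, genF, ← map_mul, MonoidAlgebra.of_apply,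
    MonoidAlgebra.single_mul_single, one_mul, mul_one]

theorem vertex_mul_realElem {u w : V} (p : GPath sf rf u w) :
    gen R sf rf (.vertex u) * realElem R sf rf p = realElem R sf rf p := by
  induction p with
  | nil v => exact gen_vertex_mul_self v
  | cons f p _ => rw [realElem, ← mul_assoc, gen_vertex_mul_edge]

theorem ghostElem_mul_vertex {u w : V} (p : GPath sf rf u w) :
    ghostElem R sf rf p * gen R sf rf (.vertex u) = ghostElem R sf rf p := by
  induction p with
  | nil v => exact gen_vertex_mul_self v
  | cons f p _ => rw [ghostElem, mul_assoc, gen_ghost_mul_vertex]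

theorem vertex_mul_ghostElem {u w : V} (p : GPath sf rf u w) :
    gen R sf rf (.vertex w) * ghostElem R sf rf p = ghostElem R sf rf p := by
  induction p with
  | nil v => exact gen_vertex_mul_self v
  | cons f p ih => rw [ghostElem, ← mul_assoc, ih]

theorem ghostElem_mul_realElem_self {u w : V} (p : GPath sf rf u w) :
    ghostElem R sf rf p * realElem R sf rf p = gen R sf rf (.vertex w) := by
  induction p with
  | nil v => exact gen_vertex_mul_self v
  | cons f p ih =>
    rw [ghostElem, realElem, mul_assoc, ← mul_assoc (gen R sf rf _), gen_ghost_mul_edge,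
      vertex_mul_realElem, ih]

theorem ghostElem_mul_realElem_of_ne {u u' w w' : V} (h : u ≠ u') (β : GPath sf rf u w)
    (α : GPath sf rf u' w') : ghostElem R sf rf β * realElem R sf rf α = 0 := by
  rw [← ghostElem_mul_vertex β, ← vertex_mul_realElem α, mul_assoc, ← mul_assoc (gen R sf rf _),
    gen_vertex_mul_vertex_of_ne h, zero_mul, mul_zero]

theorem ghostElem_cons_mul_realElem_cons (f : Ed) {w w' : V} (p : GPath sf rf (rf f) w)
    (q : GPath sf rf (rf f) w') :
    ghostElem R sf rf (.cons f p) * realElem R sf rf (.cons f q) =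
      ghostElem R sf rf p * realElem R sf rf q := by
  rw [ghostElem, realElem, mul_assoc, ← mul_assoc (gen R sf rf _), gen_ghost_mul_edge,
    vertex_mul_realElem]

theorem ghostElem_cons_mul_realElem_cons_of_ne {f f' : Ed} (h : f ≠ f') {w w' : V}
    (p : GPath sf rf (rf f) w) (q : GPath sf rf (rf f') w') :
    ghostElem R sf rf (.cons f p) * realElem R sf rf (.cons f' q) = 0 := by
  rw [ghostElem, realElem, mul_assoc, ← mul_assoc (gen R sf rf _), gen_ghost_mul_edge_of_ne h,
    zero_mul, mul_zero]

/-- Paths are compared in `Σ v, GPath sf rf v _`, as their sources need not agree a priori. -/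
theorem prefix_trichotomy {u u' w w' : V} (β : GPath sf rf u w) (α : GPath sf rf u' w') :
    (∃ γ, (⟨_, α⟩ : Σ v, GPath sf rf v w') = ⟨_, β.comp γ⟩) ∨
      (∃ δ, (⟨_, β⟩ : Σ v, GPath sf rf v w) = ⟨_, α.comp δ⟩) ∨
      (ghostElem R sf rf β * realElem R sf rf α = 0 ∧
        ghostElem R sf rf α * realElem R sf rf β = 0) := by
  induction β generalizing u' w' with
  | nil v =>
    by_cases h : v = u'
    · subst h
      exact .inl ⟨α, rfl⟩
    · exact .inr (.inr ⟨ghostElem_mul_realElem_of_ne h _ _,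
        ghostElem_mul_realElem_of_ne (Ne.symm h) _ _⟩)
  | cons f p ih =>
    cases α with
    | nil =>
      by_cases h : u' = sf f
      · subst h
        exact .inr (.inl ⟨.cons f p, rfl⟩)
      · exact .inr (.inr ⟨ghostElem_mul_realElem_of_ne (Ne.symm h) _ _,
          ghostElem_mul_realElem_of_ne h _ _⟩)
    | cons f' p' =>
      by_cases hf : f = f'
      · subst hf
        rcases ih p' with ⟨γ, ⟨⟩⟩ | ⟨δ, ⟨⟩⟩ | ⟨h, h'⟩
        · exact .inl ⟨γ, rfl⟩
        · exact .inr (.inl ⟨δ, rfl⟩)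
        · simp only [ghostElem_cons_mul_realElem_cons, h, h', and_self, or_true]
      · exact .inr (.inr ⟨ghostElem_cons_mul_realElem_cons_of_ne hf _ _,
          ghostElem_cons_mul_realElem_cons_of_ne (Ne.symm hf) _ _⟩)

theorem realElem_comp {u v w : V} (p : GPath sf rf u v) (q : GPath sf rf v w) :
    realElem R sf rf (p.comp q) = realElem R sf rf p * realElem R sf rf q := by
  induction p with
  | nil v => rw [GPath.comp, realElem, vertex_mul_realElem]
  | cons f p ih => rw [GPath.comp, realElem, realElem, ih, mul_assoc]

theorem ghostElem_comp {u v w : V} (p : GPath sf rf u v) (q : GPath sf rf v w) :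
    ghostElem R sf rf (p.comp q) = ghostElem R sf rf q * ghostElem R sf rf p := by
  induction p with
  | nil v => rw [GPath.comp, ghostElem, ghostElem_mul_vertex]
  | cons f p ih => rw [GPath.comp, ghostElem, ghostElem, ih, mul_assoc]

theorem ghostElem_mul_realElem_comp {u v w : V} (p : GPath sf rf u v) (q : GPath sf rf v w) :
    ghostElem R sf rf p * realElem R sf rf (p.comp q) = realElem R sf rf q := by
  rw [realElem_comp, ← mul_assoc, ghostElem_mul_realElem_self, vertex_mul_realElem]

theorem ghostElem_comp_mul_realElem {u v w : V} (p : GPath sf rf u v) (q : GPath sf rf v w) :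
    ghostElem R sf rf (p.comp q) * realElem R sf rf p = ghostElem R sf rf q := by
  rw [ghostElem_comp, mul_assoc, ghostElem_mul_realElem_self, ghostElem_mul_vertex]

theorem monomial_mul_monomial {u u' u'' w : V} (α : GPath sf rf u w) (β : GPath sf rf u' w)
    (γ : GPath sf rf u'' w) :
    realElem R sf rf α * ghostElem R sf rf β * (realElem R sf rf β * ghostElem R sf rf γ) =
      realElem R sf rf α * ghostElem R sf rf γ := by
  rw [mul_assoc, ← mul_assoc (ghostElem R sf rf β), ghostElem_mul_realElem_self,
    vertex_mul_ghostElem]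

theorem commute_ofR_realElem (r : R) {u w : V} (p : GPath sf rf u w) :
    Commute (ofR R sf rf r) (realElem R sf rf p) := by
  induction p with
  | nil v => exact commute_ofR_gen r _
  | cons f p ih => exact (commute_ofR_gen r _).mul_right ih

theorem commute_ofR_ghostElem (r : R) {u w : V} (p : GPath sf rf u w) :
    Commute (ofR R sf rf r) (ghostElem R sf rf p) := by
  induction p with
  | nil v => exact commute_ofR_gen r _
  | cons f p ih => exact ih.mul_right (commute_ofR_gen r _)

theorem commute_diagonal_comp {u v w : V} (α : GPath sf rf u v) (γ : GPath sf rf v w) :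
    Commute (realElem R sf rf α * ghostElem R sf rf α)
      (realElem R sf rf (α.comp γ) * ghostElem R sf rf (α.comp γ)) := by
  have left : realElem R sf rf α * ghostElem R sf rf α *
      (realElem R sf rf (α.comp γ) * ghostElem R sf rf (α.comp γ)) =
      realElem R sf rf (α.comp γ) * ghostElem R sf rf (α.comp γ) := by
    rw [mul_assoc, ← mul_assoc (ghostElem R sf rf α), ghostElem_mul_realElem_comp, ← mul_assoc,
      ← realElem_comp]
  have right : realElem R sf rf (α.comp γ) * ghostElem R sf rf (α.comp γ) *
      (realElem R sf rf α * ghostElem R sf rf α) =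
      realElem R sf rf (α.comp γ) * ghostElem R sf rf (α.comp γ) := by
    rw [mul_assoc, ← mul_assoc (ghostElem R sf rf _), ghostElem_comp_mul_realElem,
      ← ghostElem_comp]
  exact left.trans right.symm

theorem commute_diagonal {u u' w w' : V} (α : GPath sf rf u w) (γ : GPath sf rf u' w') :
    Commute (realElem R sf rf α * ghostElem R sf rf α)
      (realElem R sf rf γ * ghostElem R sf rf γ) := by
  rcases prefix_trichotomy (R := R) α γ with ⟨γ₀, ⟨⟩⟩ | ⟨δ, ⟨⟩⟩ | ⟨h, h'⟩
  · exact commute_diagonal_comp α γ₀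
  · exact (commute_diagonal_comp γ δ).symm
  · simp only [Commute, SemiconjBy, mul_assoc, ← mul_assoc (ghostElem R sf rf _), h, h', zero_mul,
      mul_zero]

end Paths

noncomputable def diagonal (R : Type*) [Ring R] {V Ed : Type*} (sf rf : Ed → V) :
    NonUnitalSubring (LeavittPathAlgebra R sf rf) :=
  NonUnitalSubring.closure
    {e | ∃ (u w : V) (α : GPath sf rf u w), e = realElem R sf rf α * ghostElem R sf rf α}

section Grading

variable {R : Type*} [Ring R] {V Ed : Type*} {sf rf : Ed → V} {G : Type*} [Group G] {dg : Ed → G}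

instance : IsMulCommutative (diagonal R sf rf) :=
  NonUnitalSubring.isMulCommutative_closure <| by
    rintro _ ⟨u, w, α, rfl⟩ _ ⟨u', w', γ, rfl⟩
    exact commute_diagonal α γ

theorem realElem_mul_ghostElem_mem_component {g : G} {u u' w : V} {α : GPath sf rf u w}
    {β : GPath sf rf u' w} (h : α.degree dg * (β.degree dg)⁻¹ = g) :
    realElem R sf rf α * ghostElem R sf rf β ∈ component R sf rf dg g := by
  have : ofR R sf rf 1 * (realElem R sf rf α * ghostElem R sf rf β) ∈ component R sf rf dg g :=
    AddSubgroup.subset_closure ⟨1, u, u', w, α, β, h, rfl⟩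
  rwa [ofR_one, one_mul] at this

theorem ofR_mul_mem_component (r : R) {g : G} {x : LeavittPathAlgebra R sf rf}
    (hx : x ∈ component R sf rf dg g) : ofR R sf rf r * x ∈ component R sf rf dg g := by
  refine mul_mem_of_mem_closure ?_ (AddSubgroup.subset_closure rfl) hx
  rintro _ rfl _ ⟨r', u, u', w, α, β, h, rfl⟩
  rw [← mul_assoc, ofR_mul_ofR]
  exact AddSubgroup.subset_closure ⟨_, u, u', w, α, β, h, rfl⟩

theorem monomial_mul_monomial_mem_component {u₁ u₂ u₃ u₄ w w' : V} (α : GPath sf rf u₁ w)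
    (β : GPath sf rf u₂ w) (α' : GPath sf rf u₃ w') (β' : GPath sf rf u₄ w') :
    realElem R sf rf α * ghostElem R sf rf β * (realElem R sf rf α' * ghostElem R sf rf β') ∈
      component R sf rf dg
        (α.degree dg * (β.degree dg)⁻¹ * (α'.degree dg * (β'.degree dg)⁻¹)) := by
  rw [mul_assoc (realElem R sf rf α), ← mul_assoc (ghostElem R sf rf β)]
  rcases prefix_trichotomy (R := R) β α' with ⟨γ, ⟨⟩⟩ | ⟨δ, ⟨⟩⟩ | ⟨h, -⟩
  · rw [ghostElem_mul_realElem_comp, ← mul_assoc (realElem R sf rf α), ← realElem_comp]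
    refine realElem_mul_ghostElem_mem_component ?_
    simp only [GPath.degree_comp]
    group
  · rw [ghostElem_comp_mul_realElem, ← ghostElem_comp]
    refine realElem_mul_ghostElem_mem_component ?_
    simp only [GPath.degree_comp]
    group
  · rw [h, zero_mul, mul_zero]
    exact zero_mem _

theorem mul_mem_component {g h : G} {x y : LeavittPathAlgebra R sf rf}
    (hx : x ∈ component R sf rf dg g) (hy : y ∈ component R sf rf dg h) :
    x * y ∈ component R sf rf dg (g * h) := by
  refine mul_mem_of_mem_closure ?_ hx hy
  rintro _ ⟨r, u₁, u₂, w, α, β, rfl, rfl⟩ _ ⟨r', u₃, u₄, w', α', β', rfl, rfl⟩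
  have hr' := (commute_ofR_realElem r' α).mul_right (commute_ofR_ghostElem r' β)
  rw [mul_assoc (ofR R sf rf r), ← mul_assoc _ (ofR R sf rf r'), ← hr'.eq,
    mul_assoc (ofR R sf rf r')]
  exact ofR_mul_mem_component r
    (ofR_mul_mem_component r' (monomial_mul_monomial_mem_component α β α' β'))

theorem sgMul_component_le (g h : G) :
    sgMul (component R sf rf dg g) (component R sf rf dg h) ≤ component R sf rf dg (g * h) :=
  sgMul_le fun _ ha _ hb => mul_mem_component ha hb

theorem mem_component_one_of_mem_diagonal {x : LeavittPathAlgebra R sf rf}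
    (hx : x ∈ diagonal R sf rf) : x ∈ component R sf rf dg 1 := by
  induction hx using NonUnitalSubring.closure_induction with
  | mem _ hx =>
    obtain ⟨u, w, α, rfl⟩ := hx
    exact realElem_mul_ghostElem_mem_component (mul_inv_cancel _)
  | zero => exact zero_mem _
  | add _ _ _ _ hx hy => exact add_mem hx hy
  | neg _ _ hx => exact neg_mem hx
  | mul _ _ _ _ hx hy => simpa only [mul_one] using mul_mem_component hx hy

theorem mul_mem_sgMul_of_mem_diagonal (g h : G) :
    ∀ a ∈ sgMul (component R sf rf dg g) (component R sf rf dg h), ∀ b ∈ diagonal R sf rf,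
      a * b ∈ sgMul (component R sf rf dg g) (component R sf rf dg h) := fun _ ha _ hb =>
  mul_mem_sgMul (fun _ hc => by
    simpa only [mul_one] using mul_mem_component hc (mem_component_one_of_mem_diagonal hb)) ha

theorem exists_left_unit_of_mem_component {g : G} {x : LeavittPathAlgebra R sf rf}
    (hx : x ∈ component R sf rf dg g) :
    ∃ e ∈ sgMul (component R sf rf dg g) (component R sf rf dg g⁻¹), e * x = x := by
  refine (exists_left_unit_of_mem_closure
    (mul_mem_sgMul_of_mem_diagonal g g⁻¹) ?_ hx).imp fun e ⟨he, _, hex⟩ => ⟨he, hex⟩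
  rintro _ ⟨r, u, u', w, α, β, rfl, rfl⟩
  refine ⟨realElem R sf rf α * ghostElem R sf rf α, ?_,
    NonUnitalSubring.subset_closure ⟨u, w, α, rfl⟩, ?_⟩
  · rw [← monomial_mul_monomial α β α]
    exact mem_sgMul (realElem_mul_ghostElem_mem_component rfl)
      (realElem_mul_ghostElem_mem_component (by group))
  · have hr := (commute_ofR_realElem r α).mul_right (commute_ofR_ghostElem r α)
    rw [← mul_assoc, ← hr.eq, mul_assoc, monomial_mul_monomial]

theorem exists_right_unit_of_mem_component {g : G} {x : LeavittPathAlgebra R sf rf}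
    (hx : x ∈ component R sf rf dg g) :
    ∃ e ∈ sgMul (component R sf rf dg g⁻¹) (component R sf rf dg g), x * e = x := by
  refine (exists_right_unit_of_mem_closure
    (mul_mem_sgMul_of_mem_diagonal g⁻¹ g) ?_ hx).imp fun e ⟨he, _, hxe⟩ => ⟨he, hxe⟩
  rintro _ ⟨r, u, u', w, α, β, rfl, rfl⟩
  refine ⟨realElem R sf rf β * ghostElem R sf rf β, ?_,
    NonUnitalSubring.subset_closure ⟨u', w, β, rfl⟩, ?_⟩
  · rw [← monomial_mul_monomial β α β]
    exact mem_sgMul (realElem_mul_ghostElem_mem_component (by group))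
      (realElem_mul_ghostElem_mem_component rfl)
  · rw [mul_assoc, monomial_mul_monomial]

end Grading

end LPA

open LPA in
/-- If `E` is a directed graph, `R` an associative unital ring and `G` a
group, then `L_R(E)`, with any standard `G`-gradation, is symmetrically `G`-graded
(`S_g S_{g⁻¹} S_g = S_g` for all `g ∈ G`) and strongly right and strongly left
non-degenerately `G`-graded: for every `g ∈ G` and nonzero `x ∈ S_g` one has
`(S_g S_{g⁻¹}) x ≠ {0}` and `x (S_{g⁻¹} S_g) ≠ {0}`. -/
theorem leavitt_symmetrically_and_nondegenerate (R : Type*) [Ring R] {V Ed : Type*}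
    (sf rf : Ed → V) {G : Type*} [Group G] (dg : Ed → G) :
    (∀ g : G, sgMul (sgMul (component R sf rf dg g) (component R sf rf dg g⁻¹))
        (component R sf rf dg g) = component R sf rf dg g) ∧
    ∀ g : G, ∀ x ∈ component R sf rf dg g, x ≠ 0 →
      (∃ t ∈ sgMul (component R sf rf dg g) (component R sf rf dg g⁻¹), t * x ≠ 0) ∧
      (∃ t ∈ sgMul (component R sf rf dg g⁻¹) (component R sf rf dg g), x * t ≠ 0) := by
  refine ⟨fun g => le_antisymm ?_ fun x hx => ?_, fun g x hx hx0 => ?_⟩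
  · refine sgMul_le fun a ha b hb => ?_
    simpa only [mul_inv_cancel, one_mul] using mul_mem_component (sgMul_component_le _ _ ha) hb
  · obtain ⟨e, he, hex⟩ := exists_left_unit_of_mem_component hx
    exact hex ▸ mem_sgMul he hx
  · obtain ⟨e, he, hex⟩ := exists_left_unit_of_mem_component hx
    obtain ⟨e', he', hxe'⟩ := exists_right_unit_of_mem_component hx
    exact ⟨⟨e, he, by rwa [hex]⟩, ⟨e', he', by rwa [hxe']⟩⟩
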